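/- arXiv:q-alg/9601015 — 3 statements merged into one kernel-verified Lean document; each statement's English description precedes it below -/
import Mathlib

section
/- For any integers q and p with p ≠ 0, the generalized binomial coefficient C(q/p, m) := (1/m!)·∏_{l=0}^{m-1}(q/p - l) lies in the subring ℤ[1/p] of ℚ. -/
open Polynomial

lemma aux_split (P : ℕ) : ∀ n : ℕ, 0 < n → ∃ s d k : ℕ, n = s * d ∧ Nat.Coprime s P ∧ d ∣ P ^ k := by
  intro n
  induction n using Nat.strong_induction_on with
  | _ n ih =>
    intro hn
    rcases eq_or_ne (Nat.gcd n P) 1 with h1 | h1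
    · exact ⟨n, 1, 0, by ring, h1, by simp⟩
    · have hg : Nat.gcd n P ∣ n := Nat.gcd_dvd_left n P
      have hg0 : 0 < Nat.gcd n P := Nat.pos_of_dvd_of_pos hg hn
      have hg2 : 2 ≤ Nat.gcd n P := by omega
      have hlt : n / Nat.gcd n P < n := Nat.div_lt_self hn hg2
      have hpos : 0 < n / Nat.gcd n P := Nat.div_pos (Nat.le_of_dvd hn hg) hg0
      obtain ⟨s, d, k, h1', h2, h3⟩ := ih _ hlt hpos
      refine ⟨s, d * Nat.gcd n P, k + 1, ?_, h2, ?_⟩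
      · rw [← mul_assoc, ← h1', Nat.div_mul_cancel hg]
      · exact mul_dvd_mul h3 (Nat.gcd_dvd_right n P)

lemma prod_eq_desc (x : ℚ) (m : ℕ) :
    ∏ l ∈ Finset.range m, (x - l) = (descPochhammer ℚ m).eval x := by
  induction m with
  | zero => simp
  | succ n ih =>
      rw [Finset.prod_range_succ, ih, descPochhammer_succ_right]
      simp [mul_comm]

lemma int_fact_dvd (y : ℤ) (m : ℕ) : (m.factorial : ℤ) ∣ (descPochhammer ℤ m).eval y := by
  rw [Polynomial.eval_eq_smeval, Ring.descPochhammer_eq_factorial_smul_choose]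
  exact ⟨Ring.choose y m, by simp [nsmul_eq_mul]⟩

/-- For integers `q`, `p` with `p ≠ 0`, the generalized binomial coefficient
`C(q/p, m) = (1/m!)·∏_{l=0}^{m-1}(q/p - l)` lies in the subring `ℤ[1/p]` of `ℚ`. -/
theorem stmt2 (q p : ℤ) (hp : p ≠ 0) (m : ℕ) :
    (1 / (m.factorial : ℚ)) * ∏ l ∈ Finset.range m, ((q : ℚ) / (p : ℚ) - l)
      ∈ Algebra.adjoin ℤ {((p : ℚ))⁻¹} := by
  set A := Algebra.adjoin ℤ {((p : ℚ))⁻¹} with hA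
  have hp' : (p : ℚ) ≠ 0 := Int.cast_ne_zero.mpr hp
  have hinv : ((p : ℚ))⁻¹ ∈ A := Algebra.self_mem_adjoin_singleton ℤ _
  have hx : (q : ℚ) / (p : ℚ) ∈ A := by
    rw [div_eq_mul_inv]
    exact mul_mem (A.intCast_mem q) hinv
  set x : ℚ := (q : ℚ) / (p : ℚ) with hxdef
  -- split m! = s * d with s coprime to p and d dividing a power of |p|
  obtain ⟨s, d, k, hsd, hcop, hdk⟩ := aux_split p.natAbs m.factorial m.factorial_pos
  have hs0 : s ≠ 0 := by rintro rfl; simp at hsd; exact m.factorial_ne_zero hsd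
  have hd0 : d ≠ 0 := by rintro rfl; simp at hsd; exact m.factorial_ne_zero hsd
  -- d⁻¹ ∈ A
  obtain ⟨e, he⟩ := hdk
  have hna : ((p.natAbs : ℚ)) ≠ 0 := by
    simp [Int.natAbs_ne_zero, hp]
  have hdinv : ((d : ℚ))⁻¹ ∈ A := by
    have hpk : ((p.natAbs : ℚ)) ^ k = (d : ℚ) * e := by exact_mod_cast congrArg (Nat.cast : ℕ → ℚ) he
    have h1 : (d : ℚ) * ((e : ℚ) * ((p.natAbs : ℚ)⁻¹) ^ k) = 1 := by
      rw [← mul_assoc, ← hpk, ← mul_pow, mul_inv_cancel₀ hna, one_pow]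
    have hd' : ((d : ℚ))⁻¹ = (e : ℚ) * ((p.natAbs : ℚ)⁻¹) ^ k :=
      inv_eq_of_mul_eq_one_right h1
    have habs : ((p.natAbs : ℚ)) = |(p : ℚ)| := by
      rw [Nat.cast_natAbs]; push_cast; ring
    have habs2 : ((p.natAbs : ℚ))⁻¹ ∈ A := by
      rw [habs]
      rcases abs_choice ((p : ℚ)) with h | h <;> rw [h]
      · exact hinv
      · rw [inv_neg]; exact neg_mem hinv
    rw [hd']
    exact mul_mem (A.natCast_mem e) (pow_mem habs2 k)
  -- Bezout: u*p + w*s = 1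
  have hcop' : IsCoprime (s : ℤ) p := by
    rw [Int.isCoprime_iff_gcd_eq_one]
    simpa [Int.gcd] using hcop
  obtain ⟨w, u, huw⟩ := hcop'
  -- y = q * u : integer approximation of x mod s
  set y : ℤ := q * u with hy
  have hxy : x - (y : ℚ) = (s : ℚ) * ((q * w : ℤ) * (p : ℚ)⁻¹) := by
    have h2 : (w : ℚ) * s + (u : ℚ) * p = 1 := by exact_mod_cast huw
    rw [hxdef]
    push_cast [hy]
    field_simp
    first
    | linear_combination (q : ℚ) * h2
    | linear_combination 2 * (q : ℚ) * h2
    | linear_combination (-(q : ℚ)) * h2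
  -- polynomial division
  obtain ⟨G, hG⟩ := Polynomial.X_sub_C_dvd_sub_C_eval (a := y) (p := descPochhammer ℤ m)
  have hGx : (Polynomial.aeval x G : ℚ) ∈ A := by
    have := Polynomial.aeval_mem_adjoin_singleton ℤ x (p := G)
    exact (Algebra.adjoin_le (by simpa using hx) : Algebra.adjoin ℤ {x} ≤ A) this
  -- evaluate hG at x over ℚ
  have heval : (descPochhammer ℚ m).eval x - (((descPochhammer ℤ m).eval y : ℤ) : ℚ)
      = (x - y) * Polynomial.aeval x G := by
    have hmap : descPochhammer ℚ m = (descPochhammer ℤ m).map (Int.castRingHom ℚ) :=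
      (descPochhammer_map (Int.castRingHom ℚ) m).symm
    have hGmap : (G.map (Int.castRingHom ℚ)).eval x = Polynomial.aeval x G := by
      simp [Polynomial.aeval_def, Polynomial.eval_map]
    have h := congrArg (fun P : ℤ[X] => (P.map (Int.castRingHom ℚ)).eval x) hG
    simp only [Polynomial.map_sub, Polynomial.map_mul, Polynomial.map_X, Polynomial.map_C,
      Polynomial.eval_sub, Polynomial.eval_mul, Polynomial.eval_X, Polynomial.eval_C,
      eq_intCast, Int.coe_castRingHom, Polynomial.map_intCast, Polynomial.eval_intCast] at h
    rw [hmap, ← hGmap]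
    exact h
  obtain ⟨c, hc⟩ := int_fact_dvd y m
  have hfact : (m.factorial : ℚ) = (s : ℚ) * d := by exact_mod_cast congrArg (Nat.cast : ℕ → ℚ) hsd
  have hs' : (s : ℚ) ≠ 0 := Nat.cast_ne_zero.mpr hs0
  have hd' : (d : ℚ) ≠ 0 := Nat.cast_ne_zero.mpr hd0
  have key : (1 / (m.factorial : ℚ)) * ∏ l ∈ Finset.range m, (x - l)
      = (c : ℚ) + ((q * w : ℤ) : ℚ) * (p : ℚ)⁻¹ * ((d : ℚ))⁻¹ * Polynomial.aeval x G := by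
    rw [prod_eq_desc, sub_eq_iff_eq_add.mp heval, hxy, hfact]
    have hc' : (((descPochhammer ℤ m).eval y : ℤ) : ℚ) = (m.factorial : ℚ) * c := by
      exact_mod_cast congrArg (Int.cast : ℤ → ℚ) hc
    rw [hc', hfact] at *
    field_simp
    ring
  rw [key]
  exact add_mem (A.intCast_mem c)
    (mul_mem (mul_mem (mul_mem (A.intCast_mem _) hinv) hdinv) hGx)
end

section
/- Let K be an odd prime, q̌ = e^{2πi/K} and h = q̌ - 1. Then the Gauss sum G = ∑_{α=0}^{K-1} q̌^{-α²} can be written as G = h^{(K-1)/2} · w, where w is a unit of the cyclotomic ring ℤ[q̌] (both w and w⁻¹ lie in ℤ[q̌]). -/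
open Complex Finset

lemma stmt12aux_zpow {F : Type*} [Field F] {K : ℕ} [NeZero K] {ζ : F}
    (hζ : IsPrimitiveRoot ζ K) (i : ℤ) (a : ZMod K) (h : (i : ZMod K) = a) :
    ζ ^ i = ζ ^ a.val := by
  have h0 : ζ ≠ 0 := hζ.ne_zero (NeZero.ne K)
  have hdvd : (K : ℤ) ∣ i - a.val := by
    have : ((i - a.val : ℤ) : ZMod K) = 0 := by
      push_cast
      rw [h, ZMod.natCast_val, ZMod.cast_id]
      ring
    exact (ZMod.intCast_zmod_eq_zero_iff_dvd _ _).mp this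
  have h1 : ζ ^ (i - a.val) = 1 := (hζ.zpow_eq_one_iff_dvd _).mpr hdvd
  calc ζ ^ i = ζ ^ ((a.val : ℤ) + (i - a.val)) := by ring_nf
    _ = ζ ^ (a.val : ℤ) * ζ ^ (i - a.val) := zpow_add₀ h0 _ _
    _ = ζ ^ a.val := by rw [h1, mul_one, zpow_natCast]

lemma stmt12aux_unit {F : Type*} [Field F] {K : ℕ} (hK : K.Prime) (hodd : Odd K) {ζ : F}
    (hζ : IsPrimitiveRoot ζ K) :
    ∃ v vinv : F, v ∈ Algebra.adjoin ℤ ({ζ} : Set F) ∧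
      vinv ∈ Algebra.adjoin ℤ ({ζ} : Set F) ∧ v * vinv = 1 ∧
      (K : F) = v * (ζ - 1) ^ (K - 1) := by
  haveI : NeZero K := ⟨hK.ne_zero⟩
  haveI : Fact K.Prime := ⟨hK⟩
  have hK1 : 1 < K := hK.one_lt
  have hζ1 : ζ - 1 ≠ 0 := sub_ne_zero.mpr (hζ.ne_one hK1)
  set S : ℕ → F := fun j => ∑ i ∈ range j, ζ ^ i with hS
  set nj : ℕ → ℕ := fun j => ((j : ZMod K)⁻¹).val with hnj
  set T : ℕ → F := fun j => ∑ i ∈ range (nj j), (ζ ^ j) ^ i with hT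
  have hST : ∀ j, S j * (ζ - 1) = ζ ^ j - 1 := fun j => geom_sum_mul ζ j
  refine ⟨∏ k ∈ range (K - 1), S (k + 1), ∏ k ∈ range (K - 1), T (k + 1), ?_, ?_, ?_, ?_⟩
  · exact Subalgebra.prod_mem _ fun k _ => Subalgebra.sum_mem _ fun i _ =>
      Subalgebra.pow_mem _ (Algebra.self_mem_adjoin_singleton ℤ ζ) _
  · exact Subalgebra.prod_mem _ fun k _ => Subalgebra.sum_mem _ fun i _ =>
      Subalgebra.pow_mem _ (Subalgebra.pow_mem _ (Algebra.self_mem_adjoin_singleton ℤ ζ) _) _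
  · rw [← prod_mul_distrib]
    refine prod_eq_one fun k hk => ?_
    have hjlt : k + 1 < K := by
      have := mem_range.mp hk
      omega
    have hj0 : ((k + 1 : ℕ) : ZMod K) ≠ 0 := by
      rw [Ne, ZMod.natCast_eq_zero_iff]
      intro hdvd
      have := Nat.le_of_dvd (by omega) hdvd
      omega
    have hval : ((nj (k + 1) : ℕ) : ZMod K) = ((k + 1 : ℕ) : ZMod K)⁻¹ := by
      simp only [hnj, ZMod.natCast_val, ZMod.cast_id]
    have hmod : ((k + 1) * nj (k + 1)) % K = 1 := by
      have hcast : (((k + 1) * nj (k + 1) : ℕ) : ZMod K) = ((1 : ℕ) : ZMod K) := by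
        rw [Nat.cast_mul, hval, mul_inv_cancel₀ hj0, Nat.cast_one]
      have := (ZMod.natCast_eq_natCast_iff _ _ _).mp hcast
      unfold Nat.ModEq at this
      rwa [Nat.mod_eq_of_lt hK1] at this
    have hTT : T (k + 1) * (ζ ^ (k + 1) - 1) = ζ - 1 := by
      have hgs := geom_sum_mul (ζ ^ (k + 1)) (nj (k + 1))
      simp only [hT]
      rw [hgs, ← pow_mul, pow_eq_pow_mod ((k + 1) * nj (k + 1)) hζ.pow_eq_one, hmod, pow_one]
    have key : S (k + 1) * T (k + 1) * (ζ - 1) = 1 * (ζ - 1) := by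
      calc S (k + 1) * T (k + 1) * (ζ - 1) = T (k + 1) * (S (k + 1) * (ζ - 1)) := by ring
        _ = T (k + 1) * (ζ ^ (k + 1) - 1) := by rw [hST]
        _ = ζ - 1 := hTT
        _ = 1 * (ζ - 1) := (one_mul _).symm
    exact mul_right_cancel₀ hζ1 key
  · have hsucc : K - 1 + 1 = K := by omega
    have hμ : IsPrimitiveRoot ζ (K - 1 + 1) := by rwa [hsucc]
    have hprod : ∏ k ∈ range (K - 1), (1 - ζ ^ (k + 1)) = (K : F) := by
      rw [IsPrimitiveRoot.prod_one_sub_pow_eq_order hμ]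
      rw [← hsucc]; push_cast; ring
    have heven : Even (K - 1) := Nat.Odd.sub_odd hodd odd_one
    calc (K : F) = ∏ k ∈ range (K - 1), (1 - ζ ^ (k + 1)) := hprod.symm
      _ = ∏ k ∈ range (K - 1), S (k + 1) * (1 - ζ) := by
          refine prod_congr rfl fun k _ => ?_
          have := hST (k + 1)
          simp only [hS] at this ⊢
          linear_combination this
      _ = (∏ k ∈ range (K - 1), S (k + 1)) * (1 - ζ) ^ (K - 1) := by
          rw [prod_mul_distrib, prod_const, card_range]
      _ = (∏ k ∈ range (K - 1), S (k + 1)) * (ζ - 1) ^ (K - 1) := by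
          rw [← neg_sub ζ 1, Even.neg_pow heven]

lemma stmt12aux_gauss_sq {F : Type*} [Field F] [CharZero F] {K : ℕ} [hKf : Fact K.Prime]
    (hodd : Odd K) {ζ : F} (hζ : IsPrimitiveRoot ζ K) :
    (∑ α ∈ Finset.range K, ζ ^ (-(α : ℤ) ^ 2)) ^ 2
      = ((quadraticChar (ZMod K) (-1) : ℤ) : F) * K := by
  classical
  have hK := hKf.out
  haveI : NeZero K := ⟨hK.ne_zero⟩
  have hK1 : 1 < K := hK.one_lt
  haveI : Fact (1 < K) := ⟨hK1⟩
  have hchar2 : ringChar (ZMod K) ≠ 2 := by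
    rw [ZMod.ringChar_zmod_n]
    rintro rfl
    simp [Nat.odd_iff] at hodd
  set ψ : AddChar (ZMod K) F := AddChar.zmodChar K hζ.pow_eq_one with hψ
  set ψ' : AddChar (ZMod K) F := ψ.mulShift (-1) with hψ'
  set χ : MulChar (ZMod K) F :=
    (quadraticChar (ZMod K)).ringHomComp (Int.castRingHom F) with hχ
  -- ψ' is nontrivial
  have hψ'ne : ψ' ≠ 1 := by
    intro hcon
    have h1 : ψ' 1 = 1 := by rw [hcon]; simp
    have hm1 : ψ (-1) = 1 := by
      rw [hψ', AddChar.mulShift_apply] at h1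
      simpa using h1
    have : ψ 1 = 1 := by
      have := AddChar.map_add_eq_mul ψ 1 (-1)
      simp only [add_neg_cancel, AddChar.map_zero_eq_one, hm1, mul_one] at this
      exact this.symm
    rw [hψ, AddChar.zmodChar_apply, ZMod.val_one K] at this
    exact hζ.ne_one hK1 (by simpa using this)
  have hψ'prim : ψ'.IsPrimitive := AddChar.IsPrimitive.of_ne_one hψ'ne
  -- rewrite the sum as a Gauss sum
  have step1 : ∑ α ∈ Finset.range K, ζ ^ (-(α : ℤ) ^ 2) = ∑ x : ZMod K, ψ' (x ^ 2) := by
    refine Finset.sum_nbij' (fun α => (α : ZMod K)) (fun x => x.val) ?_ ?_ ?_ ?_ ?_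
    · intro a _; exact mem_univ _
    · intro x _; exact mem_range.mpr (ZMod.val_lt x)
    · intro a ha; exact ZMod.val_natCast_of_lt (mem_range.mp ha)
    · intro x _; exact ZMod.natCast_val x |>.trans (ZMod.cast_id _ _)
    · intro α _
      have := stmt12aux_zpow hζ (-(α : ℤ) ^ 2) (-((α : ZMod K) ^ 2)) (by push_cast; ring)
      rw [this, hψ', AddChar.mulShift_apply, neg_one_mul, hψ, AddChar.zmodChar_apply]
  have hcount : ∀ t : ZMod K,
      (((univ : Finset (ZMod K)).filter fun x => x ^ 2 = t).card : ℤ)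
        = quadraticChar (ZMod K) t + 1 := by
    intro t
    have := quadraticChar_card_sqrts hchar2 t
    rwa [Set.toFinset_setOf] at this
  have step2 : ∑ x : ZMod K, ψ' (x ^ 2) = gaussSum χ ψ' := by
    rw [← Finset.sum_fiberwise' univ (fun x => x ^ 2) (fun t => ψ' t)]
    have : ∀ t : ZMod K, ∑ x ∈ univ with x ^ 2 = t, ψ' t = χ t * ψ' t + ψ' t := by
      intro t
      rw [Finset.sum_const, nsmul_eq_mul]
      have hc : ((((univ : Finset (ZMod K)).filter fun x => x ^ 2 = t).card : ℕ) : F)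
          = ((quadraticChar (ZMod K) t : ℤ) : F) + 1 := by
        exact_mod_cast congrArg (fun z : ℤ => (z : F)) (hcount t)
      rw [hc, hχ]
      simp [MulChar.ringHomComp_apply]
      ring
    rw [Finset.sum_congr rfl fun t _ => this t, Finset.sum_add_distrib,
      AddChar.sum_eq_zero_of_ne_one hψ'ne, add_zero, gaussSum]
  have hχne : χ ≠ 1 :=
    (MulChar.ringHomComp_ne_one_iff (f := Int.castRingHom F) Int.cast_injective).mpr
      (quadraticChar_ne_one hchar2)
  have hχquad : χ.IsQuadratic := (quadraticChar_isQuadratic (ZMod K)).comp _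
  have := gaussSum_sq hχne hχquad hψ'prim
  rw [step1, step2, this, ZMod.card]
  simp [hχ, MulChar.ringHomComp_apply]

lemma stmt12aux_main {p : ℕ+} [hp : Fact (Nat.Prime (p : ℕ))] (hodd : Odd (p : ℕ))
    {F : Type*} [Field F] [CharZero F] [IsCyclotomicExtension {(p : ℕ)} ℚ F]
    {ζ : F} (hζ : IsPrimitiveRoot ζ (p : ℕ)) :
    ∃ w winv : F, w ∈ Algebra.adjoin ℤ ({ζ} : Set F) ∧
      winv ∈ Algebra.adjoin ℤ ({ζ} : Set F) ∧ w * winv = 1 ∧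
      ∑ α ∈ Finset.range (p : ℕ), ζ ^ (-(α : ℤ) ^ 2)
        = (ζ - 1) ^ (((p : ℕ) - 1) / 2) * w := by
  classical
  have hK := hp.out
  set K := (p : ℕ) with hKdef
  haveI : NeZero K := ⟨hK.ne_zero⟩
  have hK1 : 1 < K := hK.one_lt
  have hζ1 : (ζ - 1) ≠ 0 := sub_ne_zero.mpr (hζ.ne_one hK1)
  set m := (K - 1) / 2 with hm
  have hm2 : m * 2 = K - 1 := Nat.div_mul_cancel (Nat.Odd.sub_odd hodd odd_one).two_dvd
  set G := ∑ α ∈ Finset.range K, ζ ^ (-(α : ℤ) ^ 2) with hGdef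
  obtain ⟨v, vinv, hv, hvinv, hvv, hKv⟩ := stmt12aux_unit hK hodd hζ
  set cZ := quadraticChar (ZMod K) (-1) with hcZ
  have hsq : G ^ 2 = (cZ : F) * K := stmt12aux_gauss_sq hodd hζ
  have hcZ1 : cZ * cZ = 1 := by
    rcases (quadraticChar_isQuadratic (ZMod K)) (-1) with h | h | h
    · exfalso
      rw [quadraticChar_eq_zero_iff] at h
      exact one_ne_zero (neg_eq_zero.mp h)
    · rw [hcZ, h]; ring
    · rw [hcZ, h]; ring
  set w := G / (ζ - 1) ^ m with hw
  have hpow : ((ζ - 1) ^ m) ^ 2 = (ζ - 1) ^ (K - 1) := by rw [← pow_mul, hm2]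
  have hne : ((ζ - 1) ^ m) ≠ 0 := pow_ne_zero _ hζ1
  have hw2 : w ^ 2 = (cZ : F) * v := by
    rw [hw, div_pow, hpow, hsq, hKv]
    field_simp
  haveI hic : IsIntegralClosure (Algebra.adjoin ℤ ({ζ} : Set F)) ℤ F :=
    IsCyclotomicExtension.Rat.isIntegralClosure_adjoin_singleton_of_prime hζ
  have hmem_int : ∀ x : F, x ∈ Algebra.adjoin ℤ ({ζ} : Set F) → IsIntegral ℤ x := fun x hx =>
    IsIntegralClosure.isIntegral_iff (A := (Algebra.adjoin ℤ ({ζ} : Set F))) |>.mpr ⟨⟨x, hx⟩, rfl⟩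
  have hc_mem : ((cZ : ℤ) : F) ∈ Algebra.adjoin ℤ ({ζ} : Set F) := by
    exact_mod_cast Subalgebra.intCast_mem (Algebra.adjoin ℤ ({ζ} : Set F)) cZ
  have hcv_mem : (cZ : F) * v ∈ Algebra.adjoin ℤ ({ζ} : Set F) :=
    Subalgebra.mul_mem _ hc_mem hv
  have hwint : IsIntegral ℤ w := by
    refine IsIntegral.of_pow (n := 2) (by norm_num) ?_
    rw [hw2]
    exact hmem_int _ hcv_mem
  obtain ⟨y, hy⟩ := IsIntegralClosure.isIntegral_iff (A := (Algebra.adjoin ℤ ({ζ} : Set F))) |>.mp hwint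
  have hwmem : w ∈ Algebra.adjoin ℤ ({ζ} : Set F) := by
    rw [← hy]; exact y.2
  refine ⟨w, (cZ : F) * vinv * w, hwmem, ?_, ?_, ?_⟩
  · exact Subalgebra.mul_mem _ (Subalgebra.mul_mem _ hc_mem hvinv) hwmem
  · calc w * ((cZ : F) * vinv * w) = (cZ : F) * w ^ 2 * vinv := by ring
      _ = (cZ : F) * ((cZ : F) * v) * vinv := by rw [hw2]
      _ = ((cZ * cZ : ℤ) : F) * (v * vinv) := by push_cast; ring
      _ = 1 := by rw [hcZ1, hvv]; simp
  · rw [hw]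
    field_simp

/-- For an odd prime `K`, `q̌ = e^{2πi/K}` and `h = q̌ - 1`, the Gauss sum
`G = ∑_{α=0}^{K-1} q̌^{-α²}` can be written `G = h^{(K-1)/2}·w` with `w` a unit
of the cyclotomic ring `ℤ[q̌]` (both `w` and `w⁻¹` lie in `ℤ[q̌]`). -/
theorem stmt12 (K : ℕ) (hK : K.Prime) (hodd : Odd K) (ξ : ℂ)
    (hξ : ξ = Complex.exp (2 * Real.pi * I / K)) :
    ∃ w winv : ℂ,
      w ∈ Algebra.adjoin ℤ ({ξ} : Set ℂ) ∧
      winv ∈ Algebra.adjoin ℤ ({ξ} : Set ℂ) ∧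
      w * winv = 1 ∧
      ∑ α ∈ Finset.range K, ξ ^ (-(α : ℤ) ^ 2) = (ξ - 1) ^ ((K - 1) / 2) * w := by
  classical
  have hKpos : 0 < K := hK.pos
  have hprim : IsPrimitiveRoot ξ K := by
    rw [hξ]; exact Complex.isPrimitiveRoot_exp K hK.ne_zero
  set p : ℕ+ := ⟨K, hKpos⟩ with hp
  haveI : Fact (Nat.Prime (p : ℕ)) := ⟨hK⟩
  set F := CyclotomicField p ℚ with hF
  haveI : CharZero F := charZero_of_injective_algebraMap (algebraMap ℚ F).injective
  haveI : IsCyclotomicExtension {(p : ℕ)} ℚ F :=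
    CyclotomicField.isCyclotomicExtension (p : ℕ) ℚ
  set ζ : F := IsCyclotomicExtension.zeta p ℚ F with hzeta
  have hζ : IsPrimitiveRoot ζ (p : ℕ) := IsCyclotomicExtension.zeta_spec p ℚ F
  have hmin : minpoly ℚ ζ = Polynomial.cyclotomic K ℚ :=
    (Polynomial.cyclotomic_eq_minpoly_rat hζ hKpos).symm
  have haev : Polynomial.aeval ξ (minpoly ℚ ((hζ.powerBasis ℚ).gen)) = 0 := by
    rw [IsPrimitiveRoot.powerBasis_gen, hmin, Polynomial.aeval_def, ← Polynomial.eval_map,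
      Polynomial.map_cyclotomic]
    exact hprim.isRoot_cyclotomic hKpos
  set φ : F →ₐ[ℚ] ℂ := (hζ.powerBasis ℚ).lift ξ haev with hφ
  have hφζ : φ ζ = ξ := by
    have := (hζ.powerBasis ℚ).lift_gen ξ haev
    rwa [IsPrimitiveRoot.powerBasis_gen] at this
  have htrans : ∀ x : F, x ∈ Algebra.adjoin ℤ ({ζ} : Set F) →
      φ x ∈ Algebra.adjoin ℤ ({ξ} : Set ℂ) := by
    intro x hx
    have hmap : (Algebra.adjoin ℤ ({ζ} : Set F)).map (φ.toRingHom.toIntAlgHom) =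
        Algebra.adjoin ℤ ({ξ} : Set ℂ) := by
      erw [AlgHom.map_adjoin, Set.image_singleton]
      congr 1
      simpa using hφζ
    rw [← hmap]
    exact Subalgebra.mem_map.mpr ⟨x, hx, rfl⟩
  obtain ⟨w', winv', hw1, hw2, hw3, hw4⟩ := stmt12aux_main (p := p) hodd hζ
  refine ⟨φ w', φ winv', htrans _ hw1, htrans _ hw2, ?_, ?_⟩
  · rw [← map_mul, hw3, map_one]
  · have := congrArg φ hw4
    rw [map_sum, map_mul, map_pow, map_sub, map_one, hφζ] at this
    calc ∑ α ∈ Finset.range K, ξ ^ (-(α : ℤ) ^ 2)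
        = ∑ α ∈ Finset.range K, φ (ζ ^ (-(α : ℤ) ^ 2)) := by
          refine Finset.sum_congr rfl fun α _ => ?_
          rw [map_zpow₀, hφζ]
      _ = (ξ - 1) ^ ((K - 1) / 2) * φ w' := this
end

section
/- Dedekind sum reciprocity: for coprime nonzero integers p and q, s(p,q) + s(q,p) = (p² + q² + 1)/(12 p q) - (1/4)·sign(p q), where s(p,q) = (1/(4q)) ∑_{j=1}^{|q|-1} cot(πj/q) cot(πpj/q). -/
open Real

/-- The Dedekind sum `s(p,q) = (1/(4q))·∑_{j=1}^{|q|-1} cot(πj/q)·cot(πpj/q)`. -/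
noncomputable def dedekindSum (p q : ℤ) : ℝ :=
  (1 / (4 * (q : ℝ))) *
    ∑ j ∈ Finset.Icc 1 (q.natAbs - 1),
      (Real.cos (Real.pi * j / q) / Real.sin (Real.pi * j / q)) *
        (Real.cos (Real.pi * p * j / q) / Real.sin (Real.pi * p * j / q))

noncomputable section

open Complex Finset

namespace DS

/-- primitive root -/
def ζ (q : ℕ) : ℂ := Complex.exp (2 * π * I / q)

lemma zeta_pow (q t : ℕ) : (ζ q) ^ t = Complex.exp (2 * π * I * t / q) := by
  rw [ζ, ← Complex.exp_nat_mul]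
  ring_nf

lemma zeta_pow_eq_one_iff {q : ℕ} (hq : 0 < q) (t : ℕ) : (ζ q) ^ t = 1 ↔ q ∣ t := by
  rw [zeta_pow, Complex.exp_eq_one_iff]
  constructor
  · rintro ⟨n, hn⟩
    have hq' : (q:ℂ) ≠ 0 := Nat.cast_ne_zero.mpr hq.ne'
    have hpi : (2*π*I) ≠ 0 := by
      simp [Real.pi_ne_zero, Complex.I_ne_zero, Complex.ofReal_ne_zero]
    have h2 : (t : ℂ) = n * q := by
      field_simp at hn
      have h3 : 2*π*I * (t:ℂ) = 2*π*I * ((n:ℂ) * q) := by linear_combination (2*π*I) * hn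
      exact mul_left_cancel₀ hpi h3
    have h4 : (t : ℤ) = n * q := by exact_mod_cast h2
    have h5 : (q:ℤ) ∣ (t:ℤ) := ⟨n, by linarith⟩
    exact_mod_cast h5
  · rintro ⟨c, rfl⟩
    refine ⟨c, ?_⟩
    have hq' : (q:ℂ) ≠ 0 := Nat.cast_ne_zero.mpr hq.ne'
    field_simp
    push_cast
    ring

lemma zeta_pow_q {q : ℕ} (hq : 0 < q) : (ζ q) ^ q = 1 :=
  (zeta_pow_eq_one_iff hq q).mpr dvd_rfl

lemma zeta_ne_zero (q : ℕ) : ζ q ≠ 0 := Complex.exp_ne_zero _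

lemma zeta_pow_mod {q : ℕ} (hq : 0 < q) (a : ℕ) : (ζ q) ^ a = (ζ q) ^ (a % q) := by
  conv_lhs => rw [← Nat.mod_add_div a q]
  rw [pow_add, pow_mul, zeta_pow_q hq, one_pow, mul_one]

end DS

namespace DS
open Finset

lemma geom_zero {q : ℕ} {ω : ℂ} (hω : ω ^ q = 1) (h1 : ω ≠ 1) :
    ∑ k ∈ range q, ω ^ k = 0 := by
  rw [geom_sum_eq h1, hω, sub_self, zero_div]

lemma geom_lin {q : ℕ} {ω : ℂ} (hω : ω ^ q = 1) (h1 : ω ≠ 1) :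
    ∑ k ∈ range q, (k : ℂ) * ω ^ k = q / (ω - 1) := by
  have hne : ω - 1 ≠ 0 := sub_ne_zero.mpr h1
  rw [eq_div_iff hne, mul_comm]
  have key : (ω - 1) * ∑ k ∈ range q, (k : ℂ) * ω ^ k
      = (∑ k ∈ range q, ((↑(k+1) * ω ^ (k+1)) - (k : ℂ) * ω ^ k))
        - ω * ∑ k ∈ range q, ω ^ k := by
    rw [Finset.mul_sum, Finset.mul_sum, ← Finset.sum_sub_distrib]
    apply Finset.sum_congr rfl
    intro k _
    push_cast
    ring
  rw [key, Finset.sum_range_sub (fun k => (k : ℂ) * ω ^ k), geom_zero hω h1]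
  simp [hω]

lemma inv_sub_one {q : ℕ} (hq : 0 < q) {ω : ℂ} (hω : ω ^ q = 1) (h1 : ω ≠ 1) :
    1 / (ω - 1) = (1/q) * ∑ k ∈ Icc 1 (q-1), (k : ℂ) * ω ^ k := by
  have hq' : (q:ℂ) ≠ 0 := Nat.cast_ne_zero.mpr hq.ne'
  have h2 : ∑ k ∈ Icc 1 (q-1), (k : ℂ) * ω ^ k = ∑ k ∈ range q, (k : ℂ) * ω ^ k := by
    rw [show range q = insert 0 (Icc 1 (q-1)) from by ext x; simp; omega,
      Finset.sum_insert (by simp)]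
    simp
  rw [h2, geom_lin hω h1]
  field_simp

lemma orth {q : ℕ} (hq : 0 < q) (t : ℕ) :
    ∑ j ∈ range q, ((ζ q) ^ t) ^ j = if q ∣ t then (q:ℂ) else 0 := by
  by_cases h : q ∣ t
  · simp [h, (zeta_pow_eq_one_iff hq t).mpr h]
  · rw [if_neg h]
    refine geom_zero ?_ ?_
    · rw [← pow_mul, mul_comm, pow_mul, zeta_pow_q hq, one_pow]
    · exact fun hc => h ((zeta_pow_eq_one_iff hq t).mp hc)

end DS

namespace DS
open Finset

lemma zeta_pow_ne_one {q : ℕ} (hq : 0 < q) {j : ℕ} (h1 : 1 ≤ j) (h2 : j ≤ q - 1) :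
    (ζ q) ^ j ≠ 1 := by
  intro hc
  have := (zeta_pow_eq_one_iff hq j).mp hc
  have := Nat.le_of_dvd (by omega) this
  omega

lemma pair_inv {q : ℕ} (hq : 0 < q) {j : ℕ} (h1 : 1 ≤ j) (h2 : j ≤ q - 1) :
    1/((ζ q)^j - 1) + 1/((ζ q)^(q-j) - 1) = -1 := by
  set a := (ζ q)^j with ha
  have ha1 : a ≠ 1 := zeta_pow_ne_one hq h1 h2
  have ha0 : a ≠ 0 := pow_ne_zero _ (zeta_ne_zero q)
  have hinv : (ζ q)^(q-j) = a⁻¹ := by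
    have : a * (ζ q)^(q-j) = 1 := by
      rw [ha, ← pow_add, show j + (q - j) = q by omega, zeta_pow_q hq]
    field_simp [ha0] at this ⊢
    linear_combination this
  rw [hinv]
  have hb1 : a⁻¹ ≠ 1 := by
    intro hc; exact ha1 (by rw [← inv_inv a, hc, inv_one])
  have h3 : a - 1 ≠ 0 := sub_ne_zero.mpr ha1
  have h4 : a⁻¹ - 1 ≠ 0 := sub_ne_zero.mpr hb1
  rw [div_add_div _ _ h3 h4, div_eq_iff (mul_ne_zero h3 h4)]
  linear_combination mul_inv_cancel₀ ha0

lemma sum_inv {q : ℕ} (hq : 0 < q) :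
    ∑ j ∈ Icc 1 (q-1), 1/((ζ q)^j - 1) = -((q:ℂ)-1)/2 := by
  have hrefl : ∑ j ∈ Icc 1 (q-1), 1/((ζ q)^(q-j) - 1)
      = ∑ j ∈ Icc 1 (q-1), 1/((ζ q)^j - 1) := by
    apply Finset.sum_nbij' (fun j => q - j) (fun j => q - j)
    all_goals intro a ha <;> simp_all <;> omega
  have h2 : (2:ℂ) * ∑ j ∈ Icc 1 (q-1), 1/((ζ q)^j - 1)
      = ∑ j ∈ Icc 1 (q-1), (1/((ζ q)^j - 1) + 1/((ζ q)^(q-j) - 1)) := by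
    rw [Finset.sum_add_distrib, hrefl]; ring
  have h3 : ∑ j ∈ Icc 1 (q-1), (1/((ζ q)^j - 1) + 1/((ζ q)^(q-j) - 1))
      = ∑ j ∈ Icc 1 (q-1), (-1 : ℂ) := by
    apply Finset.sum_congr rfl
    intro j hj
    simp only [Finset.mem_Icc] at hj
    exact pair_inv hq hj.1 hj.2
  have h4 : (2:ℂ) * ∑ j ∈ Icc 1 (q-1), 1/((ζ q)^j - 1) = -((q:ℂ)-1) := by
    rw [h2, h3, Finset.sum_const, Nat.card_Icc]
    have : (q - 1 + 1 - 1 : ℕ) = q - 1 := by omega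
    rw [this]
    have : ((q-1 : ℕ) : ℂ) = (q:ℂ) - 1 := by push_cast [Nat.cast_sub hq]; ring
    simp [this]
  linear_combination h4 / 2

end DS

namespace DS
open Finset

lemma mod_mem {p q : ℕ} (hq : 0 < q) (hco : Nat.Coprime p q) {m : ℕ}
    (h1 : 1 ≤ m) (h2 : m ≤ q - 1) : 1 ≤ p * m % q ∧ p * m % q ≤ q - 1 := by
  have hlt : p * m % q < q := Nat.mod_lt _ hq
  have hne : p * m % q ≠ 0 := by
    intro hc
    have hdvd : q ∣ p * m := Nat.dvd_of_mod_eq_zero hc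
    have : q ∣ m := (Nat.Coprime.dvd_of_dvd_mul_left (Nat.Coprime.symm hco) hdvd)
    have := Nat.le_of_dvd (by omega) this
    omega
  omega

lemma image_mod {p q : ℕ} (hq : 0 < q) (hco : Nat.Coprime p q) :
    (Icc 1 (q-1)).image (fun m => p * m % q) = Icc 1 (q-1) := by
  have hinj : Set.InjOn (fun m => p * m % q) (Icc 1 (q-1)) := by
    intro a ha b hb hab
    simp only [Finset.coe_Icc, Set.mem_Icc, Finset.mem_coe, Finset.mem_Icc] at ha hb
    simp only at hab
    have h1 : p * a ≡ p * b [MOD q] := by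
      unfold Nat.ModEq; omega
    have h2 : a ≡ b [MOD q] := (Nat.ModEq.cancel_left_of_coprime (by
      simpa [Nat.Coprime, Nat.coprime_comm] using hco.symm) h1)
    have := h2.eq_of_lt_of_lt (by omega) (by omega)
    exact this
  apply Finset.eq_of_subset_of_card_le
  · intro x hx
    simp only [Finset.mem_image] at hx
    obtain ⟨m, hm, rfl⟩ := hx
    simp only [Finset.mem_Icc] at hm ⊢
    exact mod_mem hq hco hm.1 hm.2
  · rw [Finset.card_image_of_injOn hinj]

/-- reindexing a sum over `Icc 1 (q-1)` by `m ↦ p*m % q` -/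
lemma sum_reindex {M : Type*} [AddCommMonoid M] {p q : ℕ} (hq : 0 < q)
    (hco : Nat.Coprime p q) (f : ℕ → M) :
    ∑ m ∈ Icc 1 (q-1), f (p * m % q) = ∑ m ∈ Icc 1 (q-1), f m := by
  conv_rhs => rw [← image_mod hq hco]
  rw [Finset.sum_image]
  intro a ha b hb hab
  have hinj : Set.InjOn (fun m => p * m % q) (Icc 1 (q-1)) := by
    intro a ha b hb hab
    simp only [Finset.coe_Icc, Set.mem_Icc, Finset.mem_coe, Finset.mem_Icc] at ha hb
    simp only at hab
    have h1 : p * a ≡ p * b [MOD q] := by unfold Nat.ModEq; omega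
    have h2 : a ≡ b [MOD q] := (Nat.ModEq.cancel_left_of_coprime (by
      simpa [Nat.Coprime, Nat.coprime_comm] using hco.symm) h1)
    exact h2.eq_of_lt_of_lt (by omega) (by omega)
  exact hinj (by simpa using ha) (by simpa using hb) hab

lemma sin_ne_zero_of_not_dvd {q : ℕ} (hq : 0 < q) {t : ℕ} (ht : ¬ q ∣ t) :
    Real.sin (π * t / q) ≠ 0 := by
  intro hc
  rw [Real.sin_eq_zero_iff] at hc
  obtain ⟨n, hn⟩ := hc
  have hq' : (q:ℝ) ≠ 0 := Nat.cast_ne_zero.mpr hq.ne'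
  have hpi := Real.pi_ne_zero
  have h2 : (t:ℝ) = n * q := by
    field_simp at hn
    have h3 : π * (t:ℝ) = π * ((n:ℝ) * q) := by linear_combination -π * hn
    exact mul_left_cancel₀ hpi h3
  have h4 : (t:ℤ) = n * q := by exact_mod_cast h2
  have h5 : (q:ℤ) ∣ (t:ℤ) := ⟨n, by linarith⟩
  exact ht (Int.ofNat_dvd.mp h5)

/-- real cotangent at πt/q as a ratio of roots of unity -/
lemma cot_ratio {q : ℕ} (hq : 0 < q) {t : ℕ} (ht : ¬ q ∣ t) :
    ((Real.cos (π * t / q) / Real.sin (π * t / q) : ℝ) : ℂ)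
      = ((ζ q)^t + 1) / (I * (1 - (ζ q)^t)) := by
  have h1 : ((Real.cos (π * t / q) / Real.sin (π * t / q) : ℝ) : ℂ)
      = Complex.cot ((π * t / q : ℝ) : ℂ) := by
    rw [Complex.ofReal_div, Complex.ofReal_cos, Complex.ofReal_sin]
    rfl
  rw [h1]
  have h2 : ((π * t / q : ℝ) : ℂ) = (π:ℂ) * ((t:ℂ)/(q:ℂ)) := by
    push_cast; ring
  rw [h2, Complex.cot_pi_eq_exp_ratio]
  congr 2 <;> rw [zeta_pow] <;> congr 1 <;> ring

end DS

namespace DS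
open Finset

lemma sum_id_C (n : ℕ) : ∑ k ∈ Icc 1 n, (k:ℂ) = n*(n+1)/2 := by
  induction n with
  | zero => simp
  | succ n ih =>
    rw [Finset.sum_Icc_succ_top (by omega), ih]
    push_cast
    ring

lemma inner_sum {p q : ℕ} (hq : 0 < q) (hco : Nat.Coprime p q) {m : ℕ}
    (h1 : 1 ≤ m) (h2 : m ≤ q - 1) :
    ∑ k ∈ Icc 1 (q-1), (k:ℂ) * (if q ∣ (k + p*m) then (q:ℂ) else 0)
      = (q:ℂ) * ((q:ℂ) - ((p*m % q : ℕ) : ℂ)) := by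
  have hs := mod_mem hq hco h1 h2
  set s := p * m % q with hsdef
  have hdm : q * (p*m/q) + s = p*m := Nat.div_add_mod _ _
  have hks : q ∣ ((q - s) + p * m) := by
    refine ⟨1 + p*m/q, ?_⟩
    rw [Nat.mul_add, Nat.mul_one]
    omega
  rw [Finset.sum_eq_single_of_mem (q - s) (by simp; omega)]
  · rw [if_pos hks]
    have hc : ((q - s : ℕ):ℂ) = (q:ℂ) - (s:ℂ) := by
      push_cast [Nat.cast_sub (by omega : s ≤ q)]; ring
    rw [hc]; ring
  · intro k hk hne
    simp only [Finset.mem_Icc] at hk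
    rw [if_neg, mul_zero]
    intro hdvd
    have h3 : q ∣ (k + s) := by
      have e1 : (k + s) % q = (k % q + s % q) % q := Nat.add_mod _ _ _
      have e2 : s % q = s := Nat.mod_eq_of_lt (by omega)
      have e3 : (k + p*m) % q = (k % q + s) % q := by
        rw [Nat.add_mod, ← hsdef]
      have e4 : (k + p*m) % q = 0 := Nat.dvd_iff_mod_eq_zero.mp hdvd
      exact Nat.dvd_of_mod_eq_zero (by rw [e1, e2, ← e3, e4])
    obtain ⟨c, hc⟩ := h3
    have hc0 : c ≠ 0 := by rintro rfl; simp at hc; omega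
    have hc2 : c < 2 := by
      by_contra hcon
      push_neg at hcon
      have : q*2 ≤ q*c := Nat.mul_le_mul_left q hcon
      omega
    have hc1 : c = 1 := by omega
    subst hc1
    omega
end DS

namespace DS
open Finset

lemma gauss_C {q : ℕ} (hq : 0 < q) :
    ∑ k ∈ Icc 1 (q-1), (k:ℂ) = ((q:ℂ)-1)*(q:ℂ)/2 := by
  rw [sum_id_C]
  have h1 : ((q-1:ℕ):ℂ) = (q:ℂ)-1 := by
    push_cast [Nat.cast_sub (by omega : 1 ≤ q)]; ring
  rw [h1]
  have h2 : ((q:ℂ)-1) + 1 = (q:ℂ) := by ring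
  rw [h2]

lemma sum_Icc_pow {q : ℕ} (hq : 0 < q) (t : ℕ) :
    ∑ j ∈ Icc 1 (q-1), ((ζ q)^t)^j = (if q ∣ t then (q:ℂ) else 0) - 1 := by
  rw [← orth hq t, show range q = insert 0 (Icc 1 (q-1)) from by ext x; simp; omega,
    Finset.sum_insert (by simp)]
  simp

lemma Tc_eq {p q : ℕ} (hq : 0 < q) (hco : Nat.Coprime p q) :
    ∑ j ∈ Icc 1 (q-1), (1/((ζ q)^j - 1)) * (1/((ζ q)^(p*j) - 1))
      = (∑ m ∈ Icc 1 (q-1), (m:ℂ) * ((q:ℂ) - ((p*m % q : ℕ):ℂ)))/(q:ℂ)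
        - ((q:ℂ)-1)^2/4 := by
  have hq' : (q:ℂ) ≠ 0 := Nat.cast_ne_zero.mpr hq.ne'
  have step1 : ∀ j ∈ Icc 1 (q-1),
      (1/((ζ q)^j - 1)) * (1/((ζ q)^(p*j) - 1))
        = (1/(q:ℂ))^2 * ∑ m ∈ Icc 1 (q-1), ∑ k ∈ Icc 1 (q-1),
            ((k:ℂ) * (m:ℂ)) * ((ζ q)^(k+p*m))^j := by
    intro j hj
    simp only [Finset.mem_Icc] at hj
    have hj1 : (ζ q)^j ≠ 1 := zeta_pow_ne_one hq hj.1 hj.2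
    have hjq : ((ζ q)^j)^q = 1 := by rw [← pow_mul, mul_comm, pow_mul, zeta_pow_q hq, one_pow]
    have hpj1 : (ζ q)^(p*j) ≠ 1 := by
      rw [zeta_pow_mod hq]
      exact zeta_pow_ne_one hq (mod_mem hq hco hj.1 hj.2).1 (mod_mem hq hco hj.1 hj.2).2
    have hpjq : ((ζ q)^(p*j))^q = 1 := by
      rw [← pow_mul, mul_comm, pow_mul, zeta_pow_q hq, one_pow]
    rw [inv_sub_one hq hjq hj1, inv_sub_one hq hpjq hpj1]
    calc (1/(q:ℂ) * ∑ k ∈ Icc 1 (q-1), (k:ℂ) * ((ζ q)^j)^k)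
          * (1/(q:ℂ) * ∑ m ∈ Icc 1 (q-1), (m:ℂ) * ((ζ q)^(p*j))^m)
        = (1/(q:ℂ))^2 * ((∑ k ∈ Icc 1 (q-1), (k:ℂ) * ((ζ q)^j)^k)
            * (∑ m ∈ Icc 1 (q-1), (m:ℂ) * ((ζ q)^(p*j))^m)) := by ring
      _ = (1/(q:ℂ))^2 * ∑ m ∈ Icc 1 (q-1), (∑ k ∈ Icc 1 (q-1), (k:ℂ) * ((ζ q)^j)^k)
            * ((m:ℂ) * ((ζ q)^(p*j))^m) := by rw [Finset.mul_sum]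
      _ = (1/(q:ℂ))^2 * ∑ m ∈ Icc 1 (q-1), ∑ k ∈ Icc 1 (q-1),
            ((k:ℂ) * ((ζ q)^j)^k) * ((m:ℂ) * ((ζ q)^(p*j))^m) := by
          congr 1
          exact Finset.sum_congr rfl fun m _ => Finset.sum_mul _ _ _
      _ = (1/(q:ℂ))^2 * ∑ m ∈ Icc 1 (q-1), ∑ k ∈ Icc 1 (q-1),
            ((k:ℂ) * (m:ℂ)) * ((ζ q)^(k+p*m))^j := by
          congr 1
          refine Finset.sum_congr rfl fun m _ => Finset.sum_congr rfl fun k _ => ?_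
          have hpow : ((ζ q)^j)^k * ((ζ q)^(p*j))^m = ((ζ q)^(k+p*m))^j := by
            rw [← pow_mul, ← pow_mul, ← pow_add, ← pow_mul]
            congr 1
            ring
          rw [show ((k:ℂ) * ((ζ q)^j)^k) * ((m:ℂ) * ((ζ q)^(p*j))^m)
            = ((k:ℂ)*(m:ℂ)) * (((ζ q)^j)^k * ((ζ q)^(p*j))^m) by ring, hpow]
  rw [Finset.sum_congr rfl step1, ← Finset.mul_sum]
  rw [Finset.sum_comm]
  have swap2 : ∀ m ∈ Icc 1 (q-1),
      ∑ j ∈ Icc 1 (q-1), ∑ k ∈ Icc 1 (q-1), ((k:ℂ) * (m:ℂ)) * ((ζ q)^(k+p*m))^j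
        = ∑ k ∈ Icc 1 (q-1), ∑ j ∈ Icc 1 (q-1), ((k:ℂ) * (m:ℂ)) * ((ζ q)^(k+p*m))^j :=
    fun m _ => Finset.sum_comm
  rw [Finset.sum_congr rfl swap2]
  have step2 : ∀ m ∈ Icc 1 (q-1),
      ∑ k ∈ Icc 1 (q-1), ∑ j ∈ Icc 1 (q-1), ((k:ℂ) * (m:ℂ)) * ((ζ q)^(k+p*m))^j
        = (q:ℂ) * ((m:ℂ) * ((q:ℂ) - ((p*m % q : ℕ):ℂ)))
            - (m:ℂ) * (((q:ℂ)-1)*(q:ℂ)/2) := by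
    intro m hm
    simp only [Finset.mem_Icc] at hm
    have e1 : ∀ k ∈ Icc 1 (q-1),
        ∑ j ∈ Icc 1 (q-1), ((k:ℂ) * (m:ℂ)) * ((ζ q)^(k+p*m))^j
          = ((k:ℂ) * (m:ℂ)) * ((if q ∣ (k + p*m) then (q:ℂ) else 0) - 1) := by
      intro k _
      rw [← Finset.mul_sum, sum_Icc_pow hq]
    rw [Finset.sum_congr rfl e1]
    have e2 : ∑ k ∈ Icc 1 (q-1), ((k:ℂ) * (m:ℂ)) * ((if q ∣ (k + p*m) then (q:ℂ) else 0) - 1)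
        = (m:ℂ) * (∑ k ∈ Icc 1 (q-1), (k:ℂ) * (if q ∣ (k + p*m) then (q:ℂ) else 0))
          - (m:ℂ) * (∑ k ∈ Icc 1 (q-1), (k:ℂ)) := by
      rw [Finset.mul_sum, Finset.mul_sum, ← Finset.sum_sub_distrib]
      exact Finset.sum_congr rfl fun k _ => by ring
    rw [e2, inner_sum hq hco hm.1 hm.2, gauss_C hq]
    ring
  rw [Finset.sum_congr rfl step2, Finset.sum_sub_distrib, ← Finset.mul_sum]
  have e3 : ∑ m ∈ Icc 1 (q-1), (m:ℂ) * (((q:ℂ)-1)*(q:ℂ)/2)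
      = (((q:ℂ)-1)*(q:ℂ)/2) * ∑ m ∈ Icc 1 (q-1), (m:ℂ) := by
    rw [Finset.mul_sum]
    exact Finset.sum_congr rfl fun m _ => by ring
  rw [e3, gauss_C hq]
  field_simp
  ring

end DS

namespace DS
open Finset

lemma key_prod {A B : ℂ} (hA : A ≠ 1) (hB : B ≠ 1) :
    (A+1)/(I*(1-A)) * ((B+1)/(I*(1-B)))
      = -1 - 2*(1/(A-1)) - 2*(1/(B-1)) - 4*((1/(A-1))*(1/(B-1))) := by
  have h1 : (1-A) ≠ 0 := fun hc => hA (by linear_combination -hc)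
  have h2 : (1-B) ≠ 0 := fun hc => hB (by linear_combination -hc)
  have h3 : (A-1) ≠ 0 := sub_ne_zero.mpr hA
  have h4 : (B-1) ≠ 0 := sub_ne_zero.mpr hB
  have hI : I ≠ 0 := Complex.I_ne_zero
  rw [div_mul_div_comm]
  have hden : I*(1-A) * (I*(1-B)) = -((1-A)*(1-B)) := by
    linear_combination (1-A)*(1-B) * Complex.I_mul_I
  rw [hden]
  field_simp
  ring

lemma cot_sum_eq {p q : ℕ} (hp : 0 < p) (hq : 0 < q) (hco : Nat.Coprime p q) :
    ((∑ j ∈ Icc 1 (q-1), (Real.cos (π*j/q)/Real.sin (π*j/q))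
        * (Real.cos (π*(p*j : ℕ)/q)/Real.sin (π*(p*j : ℕ)/q)) : ℝ) : ℂ)
      = ((q:ℂ)-1)
        - 4*((∑ m ∈ Icc 1 (q-1), (m:ℂ) * ((q:ℂ) - ((p*m % q : ℕ):ℂ)))/(q:ℂ)
          - ((q:ℂ)-1)^2/4) := by
  rw [Complex.ofReal_sum]
  have hterm : ∀ j ∈ Icc 1 (q-1),
      (((Real.cos (π*j/q)/Real.sin (π*j/q))
        * (Real.cos (π*(p*j : ℕ)/q)/Real.sin (π*(p*j : ℕ)/q)) : ℝ) : ℂ)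
      = -1 - 2*(1/((ζ q)^j-1)) - 2*(1/((ζ q)^(p*j)-1))
          - 4*((1/((ζ q)^j-1))*(1/((ζ q)^(p*j)-1))) := by
    intro j hj
    simp only [Finset.mem_Icc] at hj
    have hdj : ¬ q ∣ j := fun hc => by have := Nat.le_of_dvd (by omega) hc; omega
    have hdpj : ¬ q ∣ p*j := fun hc => by
      have : q ∣ j := (Nat.Coprime.dvd_of_dvd_mul_left
        (Nat.Coprime.symm hco) hc)
      have := Nat.le_of_dvd (by omega) this; omega
    have hA : (ζ q)^j ≠ 1 := zeta_pow_ne_one hq hj.1 hj.2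
    have hB : (ζ q)^(p*j) ≠ 1 := by
      rw [zeta_pow_mod hq]
      exact zeta_pow_ne_one hq (mod_mem hq hco hj.1 hj.2).1 (mod_mem hq hco hj.1 hj.2).2
    rw [Complex.ofReal_mul, cot_ratio hq hdj, cot_ratio hq hdpj, key_prod hA hB]
  rw [Finset.sum_congr rfl hterm]
  have hS2 : ∑ j ∈ Icc 1 (q-1), 1/((ζ q)^(p*j)-1) = -((q:ℂ)-1)/2 := by
    have e : ∀ j ∈ Icc 1 (q-1), 1/((ζ q)^(p*j)-1) = 1/((ζ q)^(p*j % q)-1) := by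
      intro j _; rw [← zeta_pow_mod hq]
    rw [Finset.sum_congr rfl e, sum_reindex hq hco (fun t => 1/((ζ q)^t-1)), sum_inv hq]
  have split : ∑ j ∈ Icc 1 (q-1),
      (-1 - 2*(1/((ζ q)^j-1)) - 2*(1/((ζ q)^(p*j)-1))
        - 4*((1/((ζ q)^j-1))*(1/((ζ q)^(p*j)-1))) : ℂ)
      = (∑ _j ∈ Icc 1 (q-1), (-1:ℂ))
        - 2*(∑ j ∈ Icc 1 (q-1), 1/((ζ q)^j-1))
        - 2*(∑ j ∈ Icc 1 (q-1), 1/((ζ q)^(p*j)-1))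
        - 4*(∑ j ∈ Icc 1 (q-1), (1/((ζ q)^j-1))*(1/((ζ q)^(p*j)-1))) := by
    rw [Finset.mul_sum, Finset.mul_sum, Finset.mul_sum, ← Finset.sum_sub_distrib,
      ← Finset.sum_sub_distrib, ← Finset.sum_sub_distrib]
  rw [split, sum_inv hq, hS2, Tc_eq hq hco, Finset.sum_const, nsmul_eq_mul]
  have hcast2 : ((q-1+1-1 : ℕ) : ℂ) = (q:ℂ)-1 := by
    have h : (q-1+1-1 : ℕ) = q - 1 := by omega
    rw [h, Nat.cast_sub (show (1:ℕ) ≤ q from hq)]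
    push_cast; ring
  rw [Nat.card_Icc, hcast2]
  ring

end DS

namespace DS
open Finset

/-- `∑ m·⌊am/b⌋` -/
def Anat (a b : ℕ) : ℕ := ∑ m ∈ Icc 1 (b-1), m * (a*m / b)

lemma sum_id_Z (n : ℕ) : 2 * ∑ k ∈ Icc 1 n, (k:ℤ) = n*(n+1) := by
  induction n with
  | zero => simp
  | succ n ih =>
    rw [Finset.sum_Icc_succ_top (by omega), mul_add, ih]
    push_cast
    ring

lemma sum_sq_Z (n : ℕ) : 6 * ∑ k ∈ Icc 1 n, (k:ℤ)^2 = n*(n+1)*(2*n+1) := by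
  induction n with
  | zero => simp
  | succ n ih =>
    rw [Finset.sum_Icc_succ_top (by omega), mul_add, ih]
    push_cast
    ring

lemma div_lt_of_lt {a b m : ℕ} (hb : 0 < b) (h : m ≤ b - 1) (ha : 0 < a) :
    a*m/b ≤ a - 1 := by
  have hm : m < b := by omega
  have h1 : a*m < b*a := by
    calc a*m = m*a := Nat.mul_comm _ _
      _ < b*a := Nat.mul_lt_mul_of_lt_of_le hm (le_refl a) ha
  have := Nat.div_lt_of_lt_mul h1
  omega

/-- condition swap: for `a ∤ c`, `c ≤ a*m ↔ c/a < m`. -/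
lemma le_iff_div_lt {a c m : ℕ} (ha : 0 < a) (hnd : ¬ a ∣ c) :
    c ≤ a*m ↔ c/a + 1 ≤ m := by
  have hr : c % a ≠ 0 := fun hc => hnd (Nat.dvd_of_mod_eq_zero hc)
  have hdm : a * (c/a) + c % a = c := Nat.div_add_mod _ _
  have hrlt : c % a < a := Nat.mod_lt _ ha
  constructor
  · intro h
    by_contra hcon
    push_neg at hcon
    have hm : m ≤ c/a := by omega
    have : a*m ≤ a*(c/a) := Nat.mul_le_mul_left a hm
    omega
  · intro h
    have : a*(c/a+1) ≤ a*m := Nat.mul_le_mul_left a h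
    rw [Nat.mul_add, Nat.mul_one] at this
    omega

lemma not_dvd_nb {a b n : ℕ} (hco : Nat.Coprime a b) (h1 : 1 ≤ n) (h2 : n ≤ a - 1) :
    ¬ a ∣ n * b := by
  intro hc
  have : a ∣ n := (Nat.Coprime.dvd_of_dvd_mul_right hco hc)
  have := Nat.le_of_dvd (by omega) this
  omega

/-- The swap lemma: `2·A(a,b) = (a-1)(b-1)b − ∑_{n<a} (⌊bn/a⌋² + ⌊bn/a⌋)`. -/
lemma swapA {a b : ℕ} (ha : 0 < a) (hb : 0 < b) (hco : Nat.Coprime a b) :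
    2 * (Anat a b : ℤ)
      = ((a:ℤ)-1)*((b:ℤ)-1)*(b:ℤ)
        - ∑ n ∈ Icc 1 (a-1), (((n*b/a : ℕ):ℤ)^2 + ((n*b/a : ℕ):ℤ)) := by
  have st1 : (Anat a b : ℤ)
      = ∑ m ∈ Icc 1 (b-1), ∑ n ∈ Icc 1 (a-1),
          (if n*b ≤ a*m then (m:ℤ) else 0) := by
    rw [Anat, Nat.cast_sum]
    apply Finset.sum_congr rfl
    intro m hm
    simp only [Finset.mem_Icc] at hm
    have hfil : (Icc 1 (a-1)).filter (fun n => n*b ≤ a*m) = Icc 1 (a*m/b) := by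
      have hK : a*m/b ≤ a - 1 := div_lt_of_lt hb hm.2 ha
      ext n
      simp only [Finset.mem_filter, Finset.mem_Icc]
      constructor
      · rintro ⟨⟨h1, h2⟩, h3⟩
        exact ⟨h1, (Nat.le_div_iff_mul_le hb).mpr h3⟩
      · rintro ⟨h1, h2⟩
        exact ⟨⟨h1, le_trans h2 hK⟩, (Nat.le_div_iff_mul_le hb).mp h2⟩
    rw [← Finset.sum_filter, hfil, Finset.sum_const, Nat.card_Icc,
      Nat.add_sub_cancel, nsmul_eq_mul, Nat.cast_mul]
    ring
  rw [st1, Finset.sum_comm]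
  have st2 : ∀ n ∈ Icc 1 (a-1),
      ∑ m ∈ Icc 1 (b-1), (if n*b ≤ a*m then (m:ℤ) else 0)
        = (∑ m ∈ Icc 1 (b-1), (m:ℤ)) - ∑ m ∈ Icc 1 (n*b/a), (m:ℤ) := by
    intro n hn
    simp only [Finset.mem_Icc] at hn
    have hnd : ¬ a ∣ n * b := not_dvd_nb hco hn.1 hn.2
    have hdle : n*b/a ≤ b - 1 := by
      have := div_lt_of_lt ha hn.2 hb
      rwa [Nat.mul_comm] at this
    obtain ⟨d, hgen⟩ : ∃ d, n*b/a = d := ⟨_, rfl⟩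
    rw [hgen] at hdle ⊢
    have hiff : ∀ m : ℕ, n*b ≤ a*m ↔ d+1 ≤ m := by
      intro m; rw [← hgen]; exact le_iff_div_lt ha hnd
    have hfil : (Icc 1 (b-1)).filter (fun m => n*b ≤ a*m) = Icc (d+1) (b-1) := by
      ext m
      simp only [Finset.mem_filter, Finset.mem_Icc, hiff]
      omega
    rw [← Finset.sum_filter, hfil]
    have hsplit : Icc 1 (b-1) = Icc 1 d ∪ Icc (d+1) (b-1) := by
      ext x; simp only [Finset.mem_union, Finset.mem_Icc]; omega
    have hdisj : Disjoint (Icc 1 d) (Icc (d+1) (b-1)) := by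
      rw [Finset.disjoint_left]
      intro x hx hy
      simp only [Finset.mem_Icc] at hx hy
      omega
    rw [hsplit, Finset.sum_union hdisj]
    ring
  rw [Finset.sum_congr rfl st2]
  rw [Finset.sum_sub_distrib, Finset.sum_const, Nat.card_Icc]
  have h2 : 2 * ((a - 1 + 1 - 1:ℕ) • ∑ m ∈ Icc 1 (b-1), (m:ℤ))
      = ((a:ℤ)-1) * (2 * ∑ m ∈ Icc 1 (b-1), (m:ℤ)) := by
    rw [nsmul_eq_mul]
    have : ((a-1+1-1 : ℕ):ℤ) = (a:ℤ)-1 := by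
      have h : (a-1+1-1:ℕ) = a-1 := by omega
      rw [h]; push_cast [Nat.cast_sub (show (1:ℕ) ≤ a from ha)]; ring
    rw [this]; ring
  have hgauss := sum_id_Z (b-1)
  have hb1 : ((b-1:ℕ):ℤ) = (b:ℤ)-1 := by
    push_cast [Nat.cast_sub (show (1:ℕ) ≤ b from hb)]; ring
  have hinner : ∀ n ∈ Icc 1 (a-1),
      2 * ∑ m ∈ Icc 1 (n*b/a), (m:ℤ) = ((n*b/a : ℕ):ℤ)^2 + ((n*b/a : ℕ):ℤ) := by
    intro n _
    rw [sum_id_Z]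
    push_cast
    ring
  have expand : 2 * ∑ n ∈ Icc 1 (a-1), ∑ m ∈ Icc 1 (n*b/a), (m:ℤ)
      = ∑ n ∈ Icc 1 (a-1), (((n*b/a : ℕ):ℤ)^2 + ((n*b/a : ℕ):ℤ)) := by
    rw [Finset.mul_sum]
    exact Finset.sum_congr rfl fun n hn => hinner n hn
  rw [mul_sub, h2, expand]
  rw [hb1] at hgauss
  linear_combination ((a:ℤ)-1) * hgauss

lemma perm_sum_Z {a b : ℕ} (ha : 0 < a) (hco : Nat.Coprime b a) (f : ℕ → ℤ) :
    ∑ n ∈ Icc 1 (a-1), f (n*b % a) = ∑ n ∈ Icc 1 (a-1), f n := by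
  have h := sum_reindex ha hco f
  rw [← h]
  exact Finset.sum_congr rfl fun n _ => by rw [Nat.mul_comm]

/-- `a·∑⌊bn/a⌋ = (b-1)·∑n` -/
lemma E2 {a b : ℕ} (ha : 0 < a) (hb : 0 < b) (hco : Nat.Coprime a b) :
    (a:ℤ) * ∑ n ∈ Icc 1 (a-1), ((n*b/a : ℕ):ℤ)
      = ((b:ℤ)-1) * ∑ n ∈ Icc 1 (a-1), (n:ℤ) := by
  have key : ∀ n ∈ Icc 1 (a-1),
      (a:ℤ) * ((n*b/a : ℕ):ℤ) = (b:ℤ)*(n:ℤ) - ((n*b % a : ℕ):ℤ) := by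
    intro n _
    have hnm := Nat.div_add_mod (n*b) a
    have h1 : ((a * (n*b/a) + n*b % a : ℕ):ℤ) = ((n*b : ℕ):ℤ) := congrArg _ hnm
    rw [Nat.cast_add, Nat.cast_mul, Nat.cast_mul] at h1
    linarith
  rw [Finset.mul_sum, Finset.sum_congr rfl key, Finset.sum_sub_distrib]
  rw [perm_sum_Z ha (Nat.Coprime.symm hco) (fun t => (t:ℤ))]
  rw [← Finset.mul_sum]
  ring

/-- `a²·∑⌊bn/a⌋² = b²N₂ − 2b(bN₂ − a·A(b,a)) + N₂` -/
lemma E3 {a b : ℕ} (ha : 0 < a) (hb : 0 < b) (hco : Nat.Coprime a b) :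
    (a:ℤ)^2 * ∑ n ∈ Icc 1 (a-1), ((n*b/a : ℕ):ℤ)^2
      = (b:ℤ)^2 * (∑ n ∈ Icc 1 (a-1), (n:ℤ)^2)
        - 2*(b:ℤ)*((b:ℤ) * (∑ n ∈ Icc 1 (a-1), (n:ℤ)^2) - (a:ℤ) * (Anat b a : ℤ))
        + (∑ n ∈ Icc 1 (a-1), (n:ℤ)^2) := by
  have hdm : ∀ n ∈ Icc 1 (a-1),
      (a:ℤ) * ((n*b/a : ℕ):ℤ) = (b:ℤ)*(n:ℤ) - ((n*b % a : ℕ):ℤ) := by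
    intro n _
    have hnm := Nat.div_add_mod (n*b) a
    have h1 : ((a * (n*b/a) + n*b % a : ℕ):ℤ) = ((n*b : ℕ):ℤ) := congrArg _ hnm
    rw [Nat.cast_add, Nat.cast_mul, Nat.cast_mul] at h1
    linarith
  have sq : ∀ n ∈ Icc 1 (a-1),
      (a:ℤ)^2 * ((n*b/a : ℕ):ℤ)^2
        = (b:ℤ)^2*(n:ℤ)^2 - 2*(b:ℤ)*(n:ℤ)*((n*b % a : ℕ):ℤ) + ((n*b % a : ℕ):ℤ)^2 := by
    intro n hn
    have h := hdm n hn
    linear_combination ((a:ℤ)*((n*b/a : ℕ):ℤ) + (b:ℤ)*(n:ℤ) - ((n*b % a : ℕ):ℤ)) * h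
  have hperm2 : ∑ n ∈ Icc 1 (a-1), ((n*b % a : ℕ):ℤ)^2 = ∑ n ∈ Icc 1 (a-1), (n:ℤ)^2 :=
    perm_sum_Z ha (Nat.Coprime.symm hco) (fun t => (t:ℤ)^2)
  have hcross : ∑ n ∈ Icc 1 (a-1), (n:ℤ)*((n*b % a : ℕ):ℤ)
      = (b:ℤ) * (∑ n ∈ Icc 1 (a-1), (n:ℤ)^2) - (a:ℤ) * (Anat b a : ℤ) := by
    have key : ∀ n ∈ Icc 1 (a-1),
        (n:ℤ)*((n*b % a : ℕ):ℤ) = (b:ℤ)*(n:ℤ)^2 - (a:ℤ)*((n:ℤ) * ((n*b/a : ℕ):ℤ)) := by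
      intro n hn
      have h := hdm n hn
      linear_combination (n:ℤ) * h
    rw [Finset.sum_congr rfl key, Finset.sum_sub_distrib, ← Finset.mul_sum, ← Finset.mul_sum]
    have hA : (Anat b a : ℤ) = ∑ n ∈ Icc 1 (a-1), (n:ℤ) * ((n*b/a : ℕ):ℤ) := by
      rw [Anat, Nat.cast_sum]
      refine Finset.sum_congr rfl fun n _ => ?_
      rw [Nat.mul_comm b n, Nat.cast_mul]
    rw [hA]
  calc (a:ℤ)^2 * ∑ n ∈ Icc 1 (a-1), ((n*b/a : ℕ):ℤ)^2
      = ∑ n ∈ Icc 1 (a-1), (a:ℤ)^2 * ((n*b/a : ℕ):ℤ)^2 := Finset.mul_sum _ _ _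
    _ = ∑ n ∈ Icc 1 (a-1), ((b:ℤ)^2*(n:ℤ)^2 - 2*(b:ℤ)*(n:ℤ)*((n*b % a : ℕ):ℤ)
          + ((n*b % a : ℕ):ℤ)^2) := Finset.sum_congr rfl sq
    _ = (b:ℤ)^2 * (∑ n ∈ Icc 1 (a-1), (n:ℤ)^2)
          - 2*(b:ℤ)*(∑ n ∈ Icc 1 (a-1), (n:ℤ)*((n*b % a : ℕ):ℤ))
          + ∑ n ∈ Icc 1 (a-1), ((n*b % a : ℕ):ℤ)^2 := by
        have e1 : ∑ n ∈ Icc 1 (a-1), (b:ℤ)^2*(n:ℤ)^2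
            = (b:ℤ)^2 * ∑ n ∈ Icc 1 (a-1), (n:ℤ)^2 := (Finset.mul_sum _ _ _).symm
        have e2 : ∑ n ∈ Icc 1 (a-1), 2*(b:ℤ)*(n:ℤ)*((n*b % a : ℕ):ℤ)
            = 2*(b:ℤ) * ∑ n ∈ Icc 1 (a-1), (n:ℤ)*((n*b % a : ℕ):ℤ) := by
          rw [Finset.mul_sum]
          exact Finset.sum_congr rfl fun n _ => by ring
        rw [Finset.sum_add_distrib, Finset.sum_sub_distrib, e1, e2]
    _ = _ := by rw [hperm2, hcross]

/-- The key reciprocity identity for the floor sums. -/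
lemma keyB {a b : ℕ} (ha : 0 < a) (hb : 0 < b) (hco : Nat.Coprime a b) :
    12 * (a:ℤ) * (Anat a b : ℤ) + 12 * (b:ℤ) * (Anat b a : ℤ)
      = 6*(a:ℤ)*((a:ℤ)-1)*(b:ℤ)*((b:ℤ)-1) + ((b:ℤ)^2-1)*((a:ℤ)-1)*(2*(a:ℤ)-1)
        - 3*(a:ℤ)*((a:ℤ)-1)*((b:ℤ)-1) := by
  have ha' : (a:ℤ) ≠ 0 := Int.natCast_ne_zero.mpr ha.ne'
  apply mul_left_cancel₀ ha'
  have h1 := swapA ha hb hco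
  have h1' : 2 * (Anat a b : ℤ)
      = ((a:ℤ)-1)*((b:ℤ)-1)*(b:ℤ)
        - ((∑ n ∈ Icc 1 (a-1), ((n*b/a : ℕ):ℤ)^2) + ∑ n ∈ Icc 1 (a-1), ((n*b/a : ℕ):ℤ)) := by
    rw [h1, Finset.sum_add_distrib]
  have h2 := E2 ha hb hco
  have h3 := E3 ha hb hco
  have h4 := sum_id_Z (a-1)
  have h5 := sum_sq_Z (a-1)
  have ha1 : ((a-1:ℕ):ℤ) = (a:ℤ)-1 := by
    push_cast [Nat.cast_sub (show (1:ℕ) ≤ a from ha)]; ring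
  rw [ha1] at h4 h5
  have h4' : 2 * ∑ k ∈ Icc 1 (a-1), (k:ℤ) = ((a:ℤ)-1)*(a:ℤ) := by
    rw [h4]; ring
  have h5' : 6 * ∑ k ∈ Icc 1 (a-1), (k:ℤ)^2 = ((a:ℤ)-1)*(a:ℤ)*(2*(a:ℤ)-1) := by
    rw [h5]; ring
  linear_combination 6*(a:ℤ)^2*h1' - 6*(a:ℤ)*h2 - 6*h3 - 3*(a:ℤ)*((b:ℤ)-1)*h4' - (1-(b:ℤ)^2)*h5'

end DS

namespace DS
open Finset

lemma sum_sq_C (n : ℕ) : ∑ k ∈ Icc 1 n, (k:ℂ)^2 = n*(n+1)*(2*n+1)/6 := by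
  induction n with
  | zero => simp
  | succ n ih =>
    rw [Finset.sum_Icc_succ_top (by omega), ih]
    push_cast
    ring

lemma gauss_sq_C {b : ℕ} (hb : 0 < b) :
    ∑ m ∈ Icc 1 (b-1), (m:ℂ)^2 = ((b:ℂ)-1)*(b:ℂ)*(2*(b:ℂ)-1)/6 := by
  rw [sum_sq_C]
  have h1 : ((b-1:ℕ):ℂ) = (b:ℂ)-1 := by
    push_cast [Nat.cast_sub (show (1:ℕ) ≤ b from hb)]; ring
  rw [h1]
  ring

lemma ded_pos {a b : ℕ} (ha : 0 < a) (hb : 0 < b) (hco : Nat.Coprime a b) :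
    12*(b:ℝ) * dedekindSum (a:ℤ) (b:ℤ)
      = 3*((b:ℝ)-1)
        - 12*((Anat a b : ℝ) + (b:ℝ)*((b:ℝ)-1)/2
          - (a:ℝ)*((b:ℝ)-1)*(2*(b:ℝ)-1)/6 - ((b:ℝ)-1)^2/4) := by
  have hbR : (b:ℝ) ≠ 0 := Nat.cast_ne_zero.mpr hb.ne'
  have hbC : (b:ℂ) ≠ 0 := Nat.cast_ne_zero.mpr hb.ne'
  -- the real cotangent sum
  set S : ℝ := ∑ j ∈ Icc 1 (b-1), (Real.cos (π*j/b)/Real.sin (π*j/b))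
      * (Real.cos (π*(a*j : ℕ)/b)/Real.sin (π*(a*j : ℕ)/b)) with hS
  set R : ℝ := ((b:ℝ)-1) - 4*(((b:ℝ)*(((b:ℝ)-1)*(b:ℝ)/2)
      - (a:ℝ)*(((b:ℝ)-1)*(b:ℝ)*(2*(b:ℝ)-1)/6) + (b:ℝ)*(Anat a b : ℝ))/(b:ℝ)
      - ((b:ℝ)-1)^2/4) with hR
  have hded : dedekindSum (a:ℤ) (b:ℤ) = (1/(4*(b:ℝ))) * S := by
    rw [dedekindSum, hS]
    simp only [Int.natAbs_natCast, Int.cast_natCast]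
    congr 1
    refine Finset.sum_congr rfl fun j _ => ?_
    have harg : π * ((a:ℝ)) * (j:ℝ) / (b:ℝ) = π * ((a*j : ℕ):ℝ) / (b:ℝ) := by
      push_cast; ring
    rw [harg]
  -- complex evaluation of S
  have hCterm : ∀ m ∈ Icc 1 (b-1), (m:ℂ)*((b:ℂ) - ((a*m % b : ℕ):ℂ))
      = (m:ℂ)*(b:ℂ) - (a:ℂ)*(m:ℂ)^2 + (b:ℂ)*((m:ℂ)*((a*m/b : ℕ):ℂ)) := by
    intro m _
    have hnm := Nat.div_add_mod (a*m) b
    have h1 : ((b * (a*m/b) + a*m % b : ℕ):ℂ) = ((a*m : ℕ):ℂ) := congrArg _ hnm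
    rw [Nat.cast_add, Nat.cast_mul, Nat.cast_mul] at h1
    linear_combination -(m:ℂ) * h1
  have hCsum : ∑ m ∈ Icc 1 (b-1), (m:ℂ)*((b:ℂ) - ((a*m % b : ℕ):ℂ))
      = (b:ℂ)*(((b:ℂ)-1)*(b:ℂ)/2) - (a:ℂ)*(((b:ℂ)-1)*(b:ℂ)*(2*(b:ℂ)-1)/6)
        + (b:ℂ)*((Anat a b : ℕ):ℂ) := by
    rw [Finset.sum_congr rfl hCterm, Finset.sum_add_distrib, Finset.sum_sub_distrib]
    have e1 : ∑ m ∈ Icc 1 (b-1), (m:ℂ)*(b:ℂ) = (b:ℂ) * ∑ m ∈ Icc 1 (b-1), (m:ℂ) := by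
      rw [Finset.mul_sum]; exact Finset.sum_congr rfl fun m _ => by ring
    have e2 : ∑ m ∈ Icc 1 (b-1), (a:ℂ)*(m:ℂ)^2 = (a:ℂ) * ∑ m ∈ Icc 1 (b-1), (m:ℂ)^2 :=
      (Finset.mul_sum _ _ _).symm
    have e3 : ∑ m ∈ Icc 1 (b-1), (b:ℂ)*((m:ℂ)*((a*m/b : ℕ):ℂ))
        = (b:ℂ) * ((Anat a b : ℕ):ℂ) := by
      rw [← Finset.mul_sum]
      congr 1
      rw [Anat, Nat.cast_sum]
      exact (Finset.sum_congr rfl fun m _ => by rw [Nat.cast_mul]).symm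
    rw [e1, e2, e3, gauss_C hb, gauss_sq_C hb]
  have hscotC := cot_sum_eq ha hb hco
  rw [hCsum] at hscotC
  have hSR : (S : ℂ) = ((R : ℝ) : ℂ) := by
    rw [hscotC, hR]
    push_cast
    field_simp
  have hSReq : S = R := Complex.ofReal_inj.mp hSR
  rw [hded, hSReq, hR]
  field_simp
  ring

end DS

namespace DS

lemma recip_pos {a b : ℕ} (ha : 0 < a) (hb : 0 < b) (hco : Nat.Coprime a b) :
    dedekindSum (a:ℤ) (b:ℤ) + dedekindSum (b:ℤ) (a:ℤ)
      = ((a:ℝ)^2 + (b:ℝ)^2 + 1)/(12*(a:ℝ)*(b:ℝ)) - 1/4 := by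
  have haR : (a:ℝ) ≠ 0 := Nat.cast_ne_zero.mpr ha.ne'
  have hbR : (b:ℝ) ≠ 0 := Nat.cast_ne_zero.mpr hb.ne'
  have h1 := ded_pos ha hb hco
  have h2 := ded_pos hb ha (Nat.Coprime.symm hco)
  have hk := keyB ha hb hco
  have hkR : 12 * (a:ℝ) * (Anat a b : ℝ) + 12 * (b:ℝ) * (Anat b a : ℝ)
      = 6*(a:ℝ)*((a:ℝ)-1)*(b:ℝ)*((b:ℝ)-1) + ((b:ℝ)^2-1)*((a:ℝ)-1)*(2*(a:ℝ)-1)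
        - 3*(a:ℝ)*((a:ℝ)-1)*((b:ℝ)-1) := by exact_mod_cast congrArg (Int.cast : ℤ → ℝ) hk
  have key2 : 12*(a:ℝ)*(b:ℝ)*(dedekindSum (a:ℤ) (b:ℤ) + dedekindSum (b:ℤ) (a:ℤ))
      = ((a:ℝ)^2 + (b:ℝ)^2 + 1) - 3*(a:ℝ)*(b:ℝ) := by
    linear_combination (a:ℝ)*h1 + (b:ℝ)*h2 - hkR
  have hne : (12:ℝ)*(a:ℝ)*(b:ℝ) ≠ 0 := by positivity
  apply mul_left_cancel₀ hne
  rw [key2]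
  field_simp
  ring

lemma ded_neg_left (p q : ℤ) : dedekindSum (-p) q = - dedekindSum p q := by
  rw [dedekindSum, dedekindSum]
  have hsum : ∑ j ∈ Finset.Icc 1 (q.natAbs - 1),
      (Real.cos (π * j / q) / Real.sin (π * j / q))
        * (Real.cos (π * ((-p : ℤ):ℝ) * j / q) / Real.sin (π * ((-p : ℤ):ℝ) * j / q))
      = - ∑ j ∈ Finset.Icc 1 (q.natAbs - 1),
        (Real.cos (π * j / q) / Real.sin (π * j / q))
          * (Real.cos (π * ((p : ℤ):ℝ) * j / q) / Real.sin (π * ((p : ℤ):ℝ) * j / q)) := by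
    rw [← Finset.sum_neg_distrib]
    refine Finset.sum_congr rfl fun j _ => ?_
    have harg : π * ((-p : ℤ):ℝ) * (j:ℝ) / ((q:ℤ):ℝ) = -(π * ((p:ℤ):ℝ) * (j:ℝ) / ((q:ℤ):ℝ)) := by
      push_cast; ring
    rw [harg, Real.cos_neg, Real.sin_neg, div_neg]
    ring
  rw [hsum]
  ring

lemma ded_neg_right (p q : ℤ) : dedekindSum p (-q) = - dedekindSum p q := by
  rw [dedekindSum, dedekindSum, Int.natAbs_neg]
  have hcast : ((-q : ℤ):ℝ) = -((q:ℤ):ℝ) := by push_cast; ring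
  have hpre : (1 : ℝ) / (4 * ((-q : ℤ):ℝ)) = -(1 / (4 * ((q:ℤ):ℝ))) := by
    rw [hcast, mul_neg, div_neg]
  have hsum : ∑ j ∈ Finset.Icc 1 (q.natAbs - 1),
      (Real.cos (π * j / ((-q:ℤ):ℝ)) / Real.sin (π * j / ((-q:ℤ):ℝ)))
        * (Real.cos (π * ((p : ℤ):ℝ) * j / ((-q:ℤ):ℝ)) / Real.sin (π * ((p : ℤ):ℝ) * j / ((-q:ℤ):ℝ)))
      = ∑ j ∈ Finset.Icc 1 (q.natAbs - 1),
        (Real.cos (π * j / ((q:ℤ):ℝ)) / Real.sin (π * j / ((q:ℤ):ℝ)))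
          * (Real.cos (π * ((p : ℤ):ℝ) * j / ((q:ℤ):ℝ)) / Real.sin (π * ((p : ℤ):ℝ) * j / ((q:ℤ):ℝ))) := by
    refine Finset.sum_congr rfl fun j _ => ?_
    have h1 : π * (j:ℝ) / ((-q:ℤ):ℝ) = -(π * (j:ℝ) / ((q:ℤ):ℝ)) := by
      rw [hcast]; ring
    have h2 : π * ((p:ℤ):ℝ) * (j:ℝ) / ((-q:ℤ):ℝ) = -(π * ((p:ℤ):ℝ) * (j:ℝ) / ((q:ℤ):ℝ)) := by
      rw [hcast]; ring
    rw [h1, h2, Real.cos_neg, Real.cos_neg, Real.sin_neg, Real.sin_neg, div_neg, div_neg]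
    ring
  rw [hsum, hpre]
  ring

end DS

end

/-- Dedekind sum reciprocity: for coprime nonzero integers `p`, `q`,
`s(p,q) + s(q,p) = (p² + q² + 1)/(12pq) - (1/4)·sign(pq)`. -/
theorem stmt14 (p q : ℤ) (hp : p ≠ 0) (hq : q ≠ 0) (hpq : IsCoprime p q) :
    dedekindSum p q + dedekindSum q p
      = ((p : ℝ) ^ 2 + (q : ℝ) ^ 2 + 1) / (12 * (p : ℝ) * (q : ℝ))
        - (1 / 4) * Real.sign ((p : ℝ) * (q : ℝ)) := by
  have hgcd : Int.gcd p q = 1 := Int.isCoprime_iff_gcd_eq_one.mp hpq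
  rcases lt_or_gt_of_ne hp with hpneg | hppos <;> rcases lt_or_gt_of_ne hq with hqneg | hqpos
  · -- p < 0, q < 0
    obtain ⟨a, rfl⟩ : ∃ a : ℕ, p = -(a:ℤ) := ⟨(-p).toNat, by omega⟩
    obtain ⟨b, rfl⟩ : ∃ b : ℕ, q = -(b:ℤ) := ⟨(-q).toNat, by omega⟩
    have ha : 0 < a := by omega
    have hb : 0 < b := by omega
    have hco : Nat.Coprime a b := by
      simpa [Int.gcd, Int.natAbs_neg] using hgcd
    have haR : (0:ℝ) < (a:ℝ) := by exact_mod_cast ha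
    have hbR : (0:ℝ) < (b:ℝ) := by exact_mod_cast hb
    have hsgn : ((-(a:ℤ) : ℤ):ℝ) * ((-(b:ℤ) : ℤ):ℝ) > 0 := by
      push_cast; nlinarith
    rw [Real.sign_of_pos hsgn, DS.ded_neg_left, DS.ded_neg_right, DS.ded_neg_left,
      DS.ded_neg_right]
    have hrec := DS.recip_pos ha hb hco
    push_cast at hrec ⊢
    rw [show 12*(-(a:ℝ))*(-(b:ℝ)) = 12*(a:ℝ)*(b:ℝ) by ring]
    ring_nf
    ring_nf at hrec
    linarith [hrec]
  · -- p < 0, q > 0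
    obtain ⟨a, rfl⟩ : ∃ a : ℕ, p = -(a:ℤ) := ⟨(-p).toNat, by omega⟩
    obtain ⟨b, rfl⟩ : ∃ b : ℕ, q = (b:ℤ) := ⟨q.toNat, by omega⟩
    have ha : 0 < a := by omega
    have hb : 0 < b := by omega
    have hco : Nat.Coprime a b := by
      simpa [Int.gcd, Int.natAbs_neg] using hgcd
    have haR : (0:ℝ) < (a:ℝ) := by exact_mod_cast ha
    have hbR : (0:ℝ) < (b:ℝ) := by exact_mod_cast hb
    have hsgn : ((-(a:ℤ) : ℤ):ℝ) * (((b:ℤ) : ℤ):ℝ) < 0 := by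
      push_cast; nlinarith
    rw [Real.sign_of_neg hsgn, DS.ded_neg_left, DS.ded_neg_right]
    have hrec := DS.recip_pos ha hb hco
    push_cast at hrec ⊢
    rw [show 12*(-(a:ℝ))*((b:ℝ)) = -(12*(a:ℝ)*(b:ℝ)) by ring, div_neg]
    ring_nf
    ring_nf at hrec
    linarith [hrec]
  · -- p > 0, q < 0
    obtain ⟨a, rfl⟩ : ∃ a : ℕ, p = (a:ℤ) := ⟨p.toNat, by omega⟩
    obtain ⟨b, rfl⟩ : ∃ b : ℕ, q = -(b:ℤ) := ⟨(-q).toNat, by omega⟩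
    have ha : 0 < a := by omega
    have hb : 0 < b := by omega
    have hco : Nat.Coprime a b := by
      simpa [Int.gcd, Int.natAbs_neg] using hgcd
    have haR : (0:ℝ) < (a:ℝ) := by exact_mod_cast ha
    have hbR : (0:ℝ) < (b:ℝ) := by exact_mod_cast hb
    have hsgn : (((a:ℤ) : ℤ):ℝ) * ((-(b:ℤ) : ℤ):ℝ) < 0 := by
      push_cast; nlinarith
    rw [Real.sign_of_neg hsgn, DS.ded_neg_right, DS.ded_neg_left]
    have hrec := DS.recip_pos ha hb hco
    push_cast at hrec ⊢
    rw [show 12*((a:ℝ))*(-(b:ℝ)) = -(12*(a:ℝ)*(b:ℝ)) by ring, div_neg]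
    ring_nf
    ring_nf at hrec
    linarith [hrec]
  · -- p > 0, q > 0
    obtain ⟨a, rfl⟩ : ∃ a : ℕ, p = (a:ℤ) := ⟨p.toNat, by omega⟩
    obtain ⟨b, rfl⟩ : ∃ b : ℕ, q = (b:ℤ) := ⟨q.toNat, by omega⟩
    have ha : 0 < a := by omega
    have hb : 0 < b := by omega
    have hco : Nat.Coprime a b := by
      simpa [Int.gcd] using hgcd
    have haR : (0:ℝ) < (a:ℝ) := by exact_mod_cast ha
    have hbR : (0:ℝ) < (b:ℝ) := by exact_mod_cast hb
    have hsgn : (((a:ℤ) : ℤ):ℝ) * (((b:ℤ) : ℤ):ℝ) > 0 := by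
      push_cast; nlinarith
    rw [Real.sign_of_pos hsgn]
    have hrec := DS.recip_pos ha hb hco
    push_cast at hrec ⊢
    ring_nf
    ring_nf at hrec
    linarith [hrec]
end
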